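/- Let A be closed and relatively bounded with respect to a closed operator B with 0 isolated in σ(B), vanishing quasinilpotent part at 0, and Riesz projection P. Then for every z ∈ ℂ with |z| > max(‖AP‖, ‖PAP‖), there exist β₀ and C ≥ 0 such that for all β ≥ β₀, z ∈ ρ(A + βB) and ‖(A + βB - z)⁻¹ - P(PAP - z)⁻¹P‖ ≤ C/β. -/

import Mathlib

/-!
STATEMENT 9: `A` closed, relatively bounded w.r.t. the closed operator `B`; `0`
isolated in `σ(B)` with vanishing quasinilpotent part and Riesz projection `P`.  Then
for `|z| > max(‖AP‖, ‖PAP‖)` there are `β₀`, `C ≥ 0` with `z ∈ ρ(A + βB)` for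
`β ≥ β₀` and `‖(A + βB - z)⁻¹ - P(PAP - z)⁻¹P‖ ≤ C/β`.
-/

noncomputable def shiftScale {H : Type*} [NormedAddCommGroup H] [InnerProductSpace ℂ H]
    (B : H →ₗ.[ℂ] H) (β : ℝ) (z : ℂ) : H →ₗ.[ℂ] H where
  domain := B.domain
  toFun := (β : ℂ) • B.toFun - z • B.domain.subtype

/-- The operator `A + βB - z` on the domain `D(B) ⊆ D(A)`. -/
noncomputable def opRel {H : Type*} [NormedAddCommGroup H] [InnerProductSpace ℂ H]
    (A B : H →ₗ.[ℂ] H) (hsub : B.domain ≤ A.domain) (β : ℝ) (z : ℂ) : H →ₗ.[ℂ] H where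
  domain := B.domain
  toFun := A.toFun.comp (Submodule.inclusion hsub) + (β : ℂ) • B.toFun
      - z • B.domain.subtype

def IsBddInverseOn {H : Type*} [NormedAddCommGroup H] [InnerProductSpace ℂ H]
    (T : H →ₗ.[ℂ] H) (R : H →L[ℂ] H) : Prop :=
  (∀ x : H, ∃ hx : R x ∈ T.domain, T ⟨R x, hx⟩ = x) ∧ ∀ y : T.domain, R (T y) = y

private lemma aux_oneSub_inv_norm_le {R : Type*} [NormedRing R] [HasSummableGeomSeries R]
    (h1 : ‖(1 : R)‖ ≤ 1) (t : R) (h : ‖t‖ ≤ 1/2) (h' : ‖t‖ < 1) :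
    ‖(↑(Units.oneSub t h')⁻¹ : R)‖ ≤ 2 := by
  set v : R := ↑(Units.oneSub t h')⁻¹ with hv
  have hmul : v * (1 - t) = 1 := by
    rw [hv, ← Units.val_oneSub t h']
    exact (Units.oneSub t h').inv_mul
  have hvid : v = 1 + v * t := by
    rw [mul_sub, mul_one] at hmul
    rw [← hmul]; abel
  have hb : ‖v‖ ≤ 1 + ‖v‖ * (1/2) := by
    calc ‖v‖ = ‖1 + v * t‖ := by rw [← hvid]
    _ ≤ ‖(1:R)‖ + ‖v * t‖ := norm_add_le _ _
    _ ≤ 1 + ‖v‖ * ‖t‖ := by have := norm_mul_le v t; linarith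
    _ ≤ 1 + ‖v‖ * (1/2) := by have := norm_nonneg v; nlinarith
  linarith

set_option maxHeartbeats 1000000 in
theorem norm_resolvent_convergence_relatively_bounded {H : Type*}
    [NormedAddCommGroup H] [InnerProductSpace ℂ H] [CompleteSpace H]
    (A B : H →ₗ.[ℂ] H) (hAclosed : A.IsClosed) (hAdense : Dense (A.domain : Set H))
    (hBclosed : B.IsClosed)
    (hsub : B.domain ≤ A.domain)
    (a b : ℝ) (ha0 : 0 ≤ a) (ha : a < 1) (hb : 0 ≤ b)
    (hrel : ∀ ψ : B.domain, ‖A ⟨(ψ : H), hsub ψ.2⟩‖ ≤ a * ‖B ψ‖ + b * ‖(ψ : H)‖)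
    -- `0 ∈ σ(B)` isolated:
    (hspec : ¬ ∃ R : H →L[ℂ] H, IsBddInverseOn (shiftScale B 1 0) R)
    (hiso : ∃ ε > (0 : ℝ), ∀ w : ℂ, w ≠ 0 → ‖w‖ < ε →
      ∃ R : H →L[ℂ] H, IsBddInverseOn (shiftScale B 1 w) R)
    -- `P` is the Riesz projection of `B` at `0`:
    (P : H →L[ℂ] H) (hidem : P ∘L P = P)
    (hPdom : ∀ x : H, P x ∈ B.domain)
    (hcomm : ∀ ψ : B.domain, B ⟨P (ψ : H), hPdom _⟩ = P (B ψ))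
    (hQinv : ∃ S : H →L[ℂ] H,
      (∀ x : H, ∃ hx : S x ∈ B.domain, P (S x) = 0 ∧ B ⟨S x, hx⟩ = x - P x) ∧
      (∀ ψ : B.domain, S (B ψ) = (ψ : H) - P (ψ : H)))
    -- vanishing quasinilpotent part:
    (hquasi : ∀ ψ : B.domain, P (B ψ) = 0)
    -- `T` is the bounded extension of `AP` (whose existence follows from the above):
    (T : H →L[ℂ] H) (hT : ∀ x : H, T x = A ⟨P x, hsub (hPdom x)⟩) :
    ∀ z : ℂ, ‖T‖ < ‖z‖ → ‖P ∘L T‖ < ‖z‖ →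
      ∃ C ≥ (0 : ℝ), ∃ β₀ : ℝ, ∀ β : ℝ, β₀ ≤ β →
        ∃ R : H →L[ℂ] H, IsBddInverseOn (opRel A B hsub β z) R ∧
          ‖R - P ∘L Ring.inverse (P ∘L T - z • 1) ∘L P‖ ≤ C / β := by
  intro z hzT hzPT
  classical
  obtain ⟨S₀, hS1, hS2⟩ := hQinv
  set Q : H →L[ℂ] H := 1 - P with hQdef
  set S' : H →L[ℂ] H := S₀ ∘L Q with hS'def
  have hQapp : ∀ x : H, Q x = x - P x := fun x => by
    rw [hQdef]; simp
  have hPP : ∀ x : H, P (P x) = P x := fun x => by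
    have := congrArg (fun f : H →L[ℂ] H => f x) hidem
    simpa using this
  have hPQ : ∀ x : H, P (Q x) = 0 := fun x => by
    rw [hQapp, map_sub, hPP, sub_self]
  -- B vanishes on the range of P
  have hBP0 : ∀ (x : H) (h : P x ∈ B.domain), B ⟨P x, h⟩ = 0 := by
    intro x h
    have h2 := hcomm ⟨P x, h⟩
    have h3 := hquasi (⟨P x, h⟩ : B.domain)
    have he : (⟨P (P x), hPdom (P x)⟩ : B.domain) = ⟨P x, h⟩ := Subtype.ext (hPP x)
    rw [he] at h2
    rw [h2, h3]
  -- facts about S'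
  have hS'mem : ∀ x : H, S' x ∈ B.domain := by
    intro x
    obtain ⟨h, -, -⟩ := hS1 (Q x)
    exact h
  have hPS' : ∀ x : H, P (S' x) = 0 := by
    intro x
    obtain ⟨h, h1, -⟩ := hS1 (Q x)
    exact h1
  have hBS' : ∀ (x : H) (h : S' x ∈ B.domain), B ⟨S' x, h⟩ = x - P x := by
    intro x h
    obtain ⟨h0, -, h2⟩ := hS1 (Q x)
    have he : (⟨S' x, h⟩ : B.domain) = ⟨S₀ (Q x), h0⟩ := Subtype.ext rfl
    rw [he, h2, hPQ, sub_zero, hQapp]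
  have hS'P : ∀ x : H, S' (P x) = 0 := by
    intro x
    show S₀ (Q (P x)) = 0
    rw [hQapp, hPP, sub_self, map_zero]
  have hS'B : ∀ ψ : B.domain, S' (B ψ) = (ψ : H) - P (ψ : H) := by
    intro ψ
    show S₀ (Q (B ψ)) = _
    rw [hQapp, hquasi, sub_zero, hS2]
  -- the bounded operator W = A S'
  set ℓ : H →ₗ[ℂ] H :=
    (A.toFun.comp (Submodule.inclusion hsub)).comp
      (LinearMap.codRestrict B.domain (S' : H →ₗ[ℂ] H) hS'mem) with hℓdef
  have hℓapp : ∀ x : H, ℓ x = A ⟨S' x, hsub (hS'mem x)⟩ := fun x => rfl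
  have hℓbound : ∀ x : H, ‖ℓ x‖ ≤ (a * (1 + ‖P‖) + b * ‖S'‖) * ‖x‖ := by
    intro x
    rw [hℓapp]
    have h1 := hrel ⟨S' x, hS'mem x⟩
    rw [hBS' x (hS'mem x)] at h1
    have h2 : ‖x - P x‖ ≤ ‖x‖ + ‖P‖ * ‖x‖ := by
      calc ‖x - P x‖ ≤ ‖x‖ + ‖P x‖ := norm_sub_le _ _
      _ ≤ ‖x‖ + ‖P‖ * ‖x‖ := by have := P.le_opNorm x; linarith
    have h3 : ‖S' x‖ ≤ ‖S'‖ * ‖x‖ := S'.le_opNorm x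
    have hx0 : (0:ℝ) ≤ ‖x‖ := norm_nonneg x
    have hP0 : (0:ℝ) ≤ ‖P‖ := norm_nonneg P
    calc ‖A ⟨S' x, hsub (hS'mem x)⟩‖ ≤ a * ‖x - P x‖ + b * ‖S' x‖ := h1
    _ ≤ a * (‖x‖ + ‖P‖ * ‖x‖) + b * (‖S'‖ * ‖x‖) := by
        have := mul_le_mul_of_nonneg_left h2 ha0
        have := mul_le_mul_of_nonneg_left h3 hb
        linarith
    _ = (a * (1 + ‖P‖) + b * ‖S'‖) * ‖x‖ := by ring
  set W : H →L[ℂ] H := ℓ.mkContinuous _ hℓbound with hWdef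
  have hWapp : ∀ x : H, W x = A ⟨S' x, hsub (hS'mem x)⟩ := fun x => rfl
  -- T ∘ P = T
  have hTP : ∀ x : H, T (P x) = T x := by
    intro x
    rw [hT, hT]
    have he : (⟨P (P x), hsub (hPdom (P x))⟩ : A.domain)
        = ⟨P x, hsub (hPdom x)⟩ := Subtype.ext (hPP x)
    rw [he]
  -- scalars
  have hz0 : z ≠ 0 := by
    intro h
    rw [h, norm_zero] at hzT
    exact absurd hzT (not_lt.mpr (norm_nonneg T))
  have hzn : (0:ℝ) < ‖z‖ := lt_of_le_of_lt (norm_nonneg T) hzT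
  have hMt : ‖z⁻¹ • T‖ < 1 := by
    rw [norm_smul, norm_inv, inv_mul_eq_div]
    exact (div_lt_one hzn).mpr hzT
  have hNt : ‖z⁻¹ • (P ∘L T)‖ < 1 := by
    rw [norm_smul, norm_inv, inv_mul_eq_div]
    exact (div_lt_one hzn).mpr hzPT
  set Mu : (H →L[ℂ] H)ˣ := Units.oneSub (z⁻¹ • T) hMt with hMudef
  set Nu : (H →L[ℂ] H)ˣ := Units.oneSub (z⁻¹ • (P ∘L T)) hNt with hNudef
  have hneg1 : (-z⁻¹) • (z • (1 : H →L[ℂ] H)) = -1 := by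
    rw [smul_smul, neg_mul, inv_mul_cancel₀ hz0, neg_smul, one_smul]
  have hscal : (-z⁻¹) • ((P ∘L T) - z • (1 : H →L[ℂ] H)) = ↑Nu := by
    rw [hNudef, Units.val_oneSub, smul_sub, hneg1, sub_neg_eq_add, neg_smul]
    abel
  set Nz : (H →L[ℂ] H)ˣ :=
    { val := (P ∘L T) - z • 1
      inv := (-z⁻¹) • ↑Nu⁻¹
      val_inv := by
        rw [mul_smul_comm, ← smul_mul_assoc, hscal, Nu.mul_inv]
      inv_val := by
        rw [smul_mul_assoc, ← mul_smul_comm, hscal, Nu.inv_mul] } with hNzdef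
  have hRing : Ring.inverse ((P ∘L T) - z • (1 : H →L[ℂ] H)) = (-z⁻¹) • ↑Nu⁻¹ := by
    have e : ((P ∘L T) - z • (1 : H →L[ℂ] H)) = ↑Nz := rfl
    rw [e, Ring.inverse_unit]
    rfl
  have hidem' : P * P = P := hidem
  have hTPc : T * P = T := by
    ext x
    exact hTP x
  have hPNu : (P : H →L[ℂ] H) * ↑Nu = P * ↑Mu := by
    rw [hNudef, hMudef, Units.val_oneSub, Units.val_oneSub, mul_sub, mul_sub,
      mul_smul_comm, mul_smul_comm]
    congr 2
    rw [show (P ∘L T) = P * T from rfl, ← mul_assoc, hidem']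
  have hNuP : (↑Nu : H →L[ℂ] H) * P = P * ↑Mu := by
    rw [hNudef, hMudef, Units.val_oneSub, Units.val_oneSub, sub_mul, mul_sub,
      one_mul, mul_one, smul_mul_assoc, mul_smul_comm]
    congr 2
    rw [show (P ∘L T) = P * T from rfl, mul_assoc, hTPc]
  have hPNuinvP : (P : H →L[ℂ] H) * ↑Nu⁻¹ * P = P * ↑Mu⁻¹ := by
    have e1 : (P : H →L[ℂ] H) * ↑Nu⁻¹ * P * ↑Mu = P := by
      rw [mul_assoc (P * (↑Nu⁻¹ : H →L[ℂ] H)), ← hNuP, mul_assoc P,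
        ← mul_assoc (↑Nu⁻¹ : H →L[ℂ] H), Units.inv_mul, one_mul, hidem']
    calc (P : H →L[ℂ] H) * ↑Nu⁻¹ * P
        = P * ↑Nu⁻¹ * P * ↑Mu * ↑Mu⁻¹ := (Units.mul_inv_cancel_right _ _).symm
    _ = P * ↑Mu⁻¹ := by rw [e1]
  have hRinf : P ∘L Ring.inverse ((P ∘L T) - z • (1 : H →L[ℂ] H)) ∘L P
      = (-z⁻¹) • ((P : H →L[ℂ] H) * ↑Mu⁻¹) := by
    rw [hRing]
    show P * ((-z⁻¹) • (↑Nu⁻¹ : H →L[ℂ] H) * P) = _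
    rw [smul_mul_assoc, mul_smul_comm, ← mul_assoc, hPNuinvP]
  -- constants
  set c1 : ℝ := ‖(↑Mu⁻¹ : H →L[ℂ] H)‖ with hc1def
  have hc10 : (0:ℝ) ≤ c1 := norm_nonneg _
  refine ⟨4 * ‖S'‖ * c1 + 4 * ‖z‖⁻¹ * ‖P‖ * ‖W‖ * c1 ^ 2, by positivity,
    1 + 2 * ‖z‖ * ‖S'‖ + 4 * ‖W‖ * c1, ?_⟩
  intro β hβ
  have haux1 : (0:ℝ) ≤ 2 * ‖z‖ * ‖S'‖ := by positivity
  have haux2 : (0:ℝ) ≤ 4 * ‖W‖ * c1 := by positivity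
  have hβ1 : (1:ℝ) ≤ β := by linarith
  have hβ0 : (0:ℝ) < β := lt_of_lt_of_le one_pos hβ1
  have hβc : ((β:ℝ):ℂ) ≠ 0 := by
    simpa using hβ0.ne'
  set c : ℂ := z * (β:ℂ)⁻¹ with hcdef
  have hβnorm : ‖((β:ℝ):ℂ)‖ = β := by
    rw [Complex.norm_real]
    exact Real.norm_of_nonneg hβ0.le
  have hcnorm : ‖c‖ = ‖z‖ / β := by
    rw [hcdef, norm_mul, norm_inv, hβnorm, div_eq_mul_inv]
  have hu2 : ‖c • S'‖ ≤ 1/2 := by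
    rw [norm_smul, hcnorm, div_mul_eq_mul_div, div_le_iff₀ hβ0]
    nlinarith [norm_nonneg S', hzn.le]
  have hu1 : ‖c • S'‖ < 1 := lt_of_le_of_lt hu2 (by norm_num)
  set Vu : (H →L[ℂ] H)ˣ := Units.oneSub (c • S') hu1 with hVudef
  have hone : ‖(1 : H →L[ℂ] H)‖ ≤ 1 := by
    rw [ContinuousLinearMap.one_def]
    exact ContinuousLinearMap.norm_id_le
  have hVinv2 : ‖(↑Vu⁻¹ : H →L[ℂ] H)‖ ≤ 2 := aux_oneSub_inv_norm_le hone _ hu2 hu1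
  -- commutation facts for Vu
  have hPS'c : (P : H →L[ℂ] H) * S' = 0 := by
    ext x
    simpa using hPS' x
  have hS'Pc : S' * (P : H →L[ℂ] H) = 0 := by
    ext x
    simpa using hS'P x
  have hPVu : (P : H →L[ℂ] H) * ↑Vu = P := by
    rw [hVudef, Units.val_oneSub, mul_sub, mul_one, mul_smul_comm, hPS'c,
      smul_zero, sub_zero]
  have hVuP : (↑Vu : H →L[ℂ] H) * P = P := by
    rw [hVudef, Units.val_oneSub, sub_mul, one_mul, smul_mul_assoc, hS'Pc,
      smul_zero, sub_zero]
  have hPVinv : (P : H →L[ℂ] H) * ↑Vu⁻¹ = P := by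
    conv_lhs => rw [← hPVu]
    rw [Units.mul_inv_cancel_right]
  have hVinvP : (↑Vu⁻¹ : H →L[ℂ] H) * P = P := by
    conv_lhs => rw [← hVuP]
    rw [Units.inv_mul_cancel_left]
  have hS'Vu : S' * ↑Vu = (↑Vu : H →L[ℂ] H) * S' := by
    rw [hVudef, Units.val_oneSub, mul_sub, sub_mul, mul_one, one_mul,
      mul_smul_comm, smul_mul_assoc]
  have hS'Vinv : (↑Vu⁻¹ : H →L[ℂ] H) * S' = S' * ↑Vu⁻¹ := by
    calc (↑Vu⁻¹ : H →L[ℂ] H) * S'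
        = ↑Vu⁻¹ * S' * (↑Vu * ↑Vu⁻¹) := by rw [Vu.mul_inv, mul_one]
    _ = ↑Vu⁻¹ * (S' * ↑Vu) * ↑Vu⁻¹ := by rw [mul_assoc, mul_assoc, mul_assoc]
    _ = ↑Vu⁻¹ * (↑Vu * S') * ↑Vu⁻¹ := by rw [hS'Vu]
    _ = S' * ↑Vu⁻¹ := by rw [← mul_assoc, Units.inv_mul, one_mul]
  have hSVapp : ∀ y : H, S' ((↑Vu⁻¹ : H →L[ℂ] H) y) = (↑Vu⁻¹ : H →L[ℂ] H) (S' y) := by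
    intro y
    have := congrArg (fun f : H →L[ℂ] H => f y) hS'Vinv
    simpa using this.symm
  -- the operators E, R0, F
  set E : H →L[ℂ] H := ((β:ℝ):ℂ)⁻¹ • (S' * ↑Vu⁻¹) with hEdef
  have hEapp : ∀ x : H, E x = ((β:ℝ):ℂ)⁻¹ • S' ((↑Vu⁻¹ : H →L[ℂ] H) x) := fun x => rfl
  have hEmem : ∀ x : H, E x ∈ B.domain := by
    intro x
    rw [hEapp]
    exact Submodule.smul_mem _ _ (hS'mem _)
  have hBE : ∀ (x : H) (h : E x ∈ B.domain),
      B ⟨E x, h⟩ = ((β:ℝ):ℂ)⁻¹ • ((↑Vu⁻¹ : H →L[ℂ] H) x - P x) := by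
    intro x h
    have he : (⟨E x, h⟩ : B.domain)
        = ((β:ℝ):ℂ)⁻¹ • ⟨S' ((↑Vu⁻¹ : H →L[ℂ] H) x), hS'mem _⟩ :=
      Subtype.ext (hEapp x)
    rw [he, LinearPMap.map_smul, hBS']
    congr 2
    have := congrArg (fun f : H →L[ℂ] H => f x) hPVinv
    simpa using this
  have hAE : ∀ (x : H) (h : E x ∈ B.domain),
      A ⟨E x, hsub h⟩ = ((β:ℝ):ℂ)⁻¹ • W ((↑Vu⁻¹ : H →L[ℂ] H) x) := by
    intro x h
    have he : (⟨E x, hsub h⟩ : A.domain)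
        = ((β:ℝ):ℂ)⁻¹ • ⟨S' ((↑Vu⁻¹ : H →L[ℂ] H) x), hsub (hS'mem _)⟩ :=
      Subtype.ext (hEapp x)
    rw [he, LinearPMap.map_smul, ← hWapp]
  set R0 : H →L[ℂ] H := (-z⁻¹) • P + E with hR0def
  have hR0app : ∀ x : H, R0 x = (-z⁻¹) • P x + E x := fun x => rfl
  have hR0mem : ∀ x : H, R0 x ∈ B.domain := fun x => by
    rw [hR0app]
    exact Submodule.add_mem _ (Submodule.smul_mem _ _ (hPdom x)) (hEmem x)
  have hBR0 : ∀ (x : H) (h : R0 x ∈ B.domain),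
      B ⟨R0 x, h⟩ = ((β:ℝ):ℂ)⁻¹ • ((↑Vu⁻¹ : H →L[ℂ] H) x - P x) := by
    intro x h
    have hsplit : (⟨R0 x, h⟩ : B.domain)
        = (-z⁻¹) • ⟨P x, hPdom x⟩ + ⟨E x, hEmem x⟩ := Subtype.ext (hR0app x)
    rw [hsplit, LinearPMap.map_add, LinearPMap.map_smul, hBP0, smul_zero, zero_add,
      hBE]
  set F : H →L[ℂ] H := ((β:ℝ):ℂ)⁻¹ • (W * ↑Vu⁻¹) with hFdef
  have hFapp : ∀ x : H, F x = ((β:ℝ):ℂ)⁻¹ • W ((↑Vu⁻¹ : H →L[ℂ] H) x) := fun x => rfl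
  have hAR0 : ∀ (x : H) (h : R0 x ∈ B.domain),
      A ⟨R0 x, hsub h⟩ = (-z⁻¹) • T x + F x := by
    intro x h
    have hsplitA : (⟨R0 x, hsub h⟩ : A.domain)
        = (-z⁻¹) • ⟨P x, hsub (hPdom x)⟩ + ⟨E x, hsub (hEmem x)⟩ :=
      Subtype.ext (hR0app x)
    rw [hsplitA, LinearPMap.map_add, LinearPMap.map_smul, ← hT, hAE x (hEmem x),
      hFapp]
  -- the key algebraic identity Vu⁻¹ - z • E = 1
  have hVzE : (↑Vu⁻¹ : H →L[ℂ] H) - z • E = 1 := by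
    have h : (1 - c • S') * (↑Vu⁻¹ : H →L[ℂ] H) = 1 := by
      rw [← Units.val_oneSub (c • S') hu1]
      exact Vu.mul_inv
    rw [sub_mul, one_mul, smul_mul_assoc] at h
    rw [← h, hEdef]
    congr 1
    rw [smul_smul, hcdef, mul_comm z]
  -- forward identity
  have hVw : ∀ w : H, (↑Vu⁻¹ : H →L[ℂ] H) w - z • E w = w := by
    intro w
    have := congrArg (fun f : H →L[ℂ] H => f w) hVzE
    simpa using this
  have hMuapp : ∀ w : H, (↑Mu : H →L[ℂ] H) w = w - z⁻¹ • T w := by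
    intro w
    rw [hMudef, Units.val_oneSub]
    simp
  have hfwd : ∀ w : H,
      opRel A B hsub β z ⟨R0 w, hR0mem w⟩ = ((↑Mu : H →L[ℂ] H) + F) w := by
    intro w
    have e : opRel A B hsub β z ⟨R0 w, hR0mem w⟩
        = A ⟨R0 w, hsub (hR0mem w)⟩ + (β:ℂ) • B ⟨R0 w, hR0mem w⟩ - z • (R0 w) := rfl
    rw [e, hAR0 w (hR0mem w), hBR0 w (hR0mem w), hR0app]
    rw [smul_smul, mul_inv_cancel₀ hβc, one_smul]
    have hzz : z • ((-z⁻¹) • P w + E w) = -(P w) + z • E w := by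
      rw [smul_add, smul_smul, mul_neg, mul_inv_cancel₀ hz0, neg_smul, one_smul]
    rw [hzz]
    rw [neg_smul]
    calc (-(z⁻¹ • T w) + F w) + ((↑Vu⁻¹ : H →L[ℂ] H) w - P w) - (-(P w) + z • E w)
        = ((↑Vu⁻¹ : H →L[ℂ] H) w - z • E w) - z⁻¹ • T w + F w := by abel
    _ = w - z⁻¹ • T w + F w := by rw [hVw w]
    _ = ((↑Mu : H →L[ℂ] H) + F) w := by rw [ContinuousLinearMap.add_apply, hMuapp]
  have hF2 : ‖F‖ ≤ 2 * ‖W‖ * β⁻¹ := by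
    rw [hFdef, norm_smul, norm_inv, hβnorm]
    have h1 := norm_mul_le W (↑Vu⁻¹ : H →L[ℂ] H)
    have h2 : ‖W * (↑Vu⁻¹ : H →L[ℂ] H)‖ ≤ ‖W‖ * 2 := by
      calc ‖W * (↑Vu⁻¹ : H →L[ℂ] H)‖ ≤ ‖W‖ * ‖(↑Vu⁻¹ : H →L[ℂ] H)‖ := h1
      _ ≤ ‖W‖ * 2 := by
          have := norm_nonneg W
          nlinarith [hVinv2]
    have hβi : (0:ℝ) ≤ β⁻¹ := by positivity
    calc β⁻¹ * ‖W * (↑Vu⁻¹ : H →L[ℂ] H)‖ ≤ β⁻¹ * (‖W‖ * 2) := by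
          exact mul_le_mul_of_nonneg_left h2 hβi
    _ = 2 * ‖W‖ * β⁻¹ := by ring
  have hMuF2 : ‖(↑Mu⁻¹ : H →L[ℂ] H) * F‖ ≤ 1/2 := by
    have h1 := norm_mul_le (↑Mu⁻¹ : H →L[ℂ] H) F
    have h2 : ‖(↑Mu⁻¹ : H →L[ℂ] H)‖ * ‖F‖ ≤ c1 * (2 * ‖W‖ * β⁻¹) := by
      rw [← hc1def]
      exact mul_le_mul_of_nonneg_left hF2 hc10
    have h3 : c1 * (2 * ‖W‖ * β⁻¹) ≤ 1/2 := by
      have h4 : 4 * ‖W‖ * c1 ≤ β := by linarith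
      have h5 : c1 * (2 * ‖W‖ * β⁻¹) = (2 * ‖W‖ * c1) / β := by
        field_simp
      rw [h5, div_le_iff₀ hβ0]
      nlinarith [norm_nonneg W, hc10]
    linarith
  have hKt : ‖-((↑Mu⁻¹ : H →L[ℂ] H) * F)‖ < 1 := by
    rw [norm_neg]
    exact lt_of_le_of_lt hMuF2 (by norm_num)
  have hKt2 : ‖-((↑Mu⁻¹ : H →L[ℂ] H) * F)‖ ≤ 1/2 := by
    rw [norm_neg]
    exact hMuF2
  set Ku : (H →L[ℂ] H)ˣ := Mu * Units.oneSub (-((↑Mu⁻¹ : H →L[ℂ] H) * F)) hKt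
    with hKudef
  have hKuval : (↑Ku : H →L[ℂ] H) = ↑Mu + F := by
    rw [hKudef, Units.val_mul]
    rw [show (↑(Units.oneSub (-((↑Mu⁻¹ : H →L[ℂ] H) * F)) hKt) : H →L[ℂ] H)
        = 1 + (↑Mu⁻¹ : H →L[ℂ] H) * F from by rw [Units.val_oneSub, sub_neg_eq_add]]
    rw [mul_add, mul_one, Units.mul_inv_cancel_left]
  -- right inverse identity
  have hRmem : ∀ x : H, (R0 * (↑Ku⁻¹ : H →L[ℂ] H)) x ∈ B.domain := fun x =>
    hR0mem _
  have hinv1 : ∀ x : H,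
      opRel A B hsub β z ⟨(R0 * (↑Ku⁻¹ : H →L[ℂ] H)) x, hRmem x⟩ = x := by
    intro x
    calc opRel A B hsub β z ⟨(R0 * (↑Ku⁻¹ : H →L[ℂ] H)) x, hRmem x⟩
        = ((↑Mu : H →L[ℂ] H) + F) ((↑Ku⁻¹ : H →L[ℂ] H) x) := hfwd _
    _ = (↑Ku : H →L[ℂ] H) ((↑Ku⁻¹ : H →L[ℂ] H) x) := by rw [hKuval]
    _ = ((↑Ku : H →L[ℂ] H) * (↑Ku⁻¹ : H →L[ℂ] H)) x := rfl
    _ = x := by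
        rw [Ku.mul_inv]
        simp
  -- left computation
  have hleft : ∀ ψ : B.domain,
      R0 (opRel A B hsub β z ψ) = (ψ:H) + R0 (A ⟨(ψ:H), hsub ψ.2⟩) := by
    intro ψ
    have e : opRel A B hsub β z ψ
        = A ⟨(ψ:H), hsub ψ.2⟩ + ((β:ℂ) • B ψ - z • (ψ:H)) := by
      show A ⟨(ψ:H), hsub ψ.2⟩ + (β:ℂ) • B ψ - z • (ψ:H) = _
      abel
    rw [e, map_add, add_comm]
    congr 1
    · -- R0 ((β:ℂ) • B ψ - z • ψ) = ψ
      rw [hR0app]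
      have hPy : P ((β:ℂ) • (B ψ) - z • (ψ:H)) = -(z • P (ψ:H)) := by
        rw [map_sub, map_smul, map_smul, hquasi, smul_zero, zero_sub]
      have hS'y : S' ((β:ℂ) • (B ψ) - z • (ψ:H))
          = (β:ℂ) • ((↑Vu : H →L[ℂ] H) (ψ:H)) - (β:ℂ) • P (ψ:H) := by
        rw [map_sub, map_smul, map_smul, hS'B]
        have hVuapp : (↑Vu : H →L[ℂ] H) (ψ:H) = (ψ:H) - c • S' (ψ:H) := by
          rw [hVudef, Units.val_oneSub]
          simp
        rw [hVuapp, smul_sub, smul_sub, smul_smul, hcdef,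
          show (β:ℂ) * (z * ((β:ℝ):ℂ)⁻¹) = z from by
            rw [mul_comm z, ← mul_assoc, mul_inv_cancel₀ hβc, one_mul]]
        abel
      have hEy : E ((β:ℂ) • (B ψ) - z • (ψ:H)) = (ψ:H) - P (ψ:H) := by
        rw [hEapp, hSVapp, hS'y, map_sub, map_smul, map_smul]
        have h1 : (↑Vu⁻¹ : H →L[ℂ] H) ((↑Vu : H →L[ℂ] H) (ψ:H)) = (ψ:H) := by
          have h := congrArg (fun f : H →L[ℂ] H => f (ψ:H)) Vu.inv_mul
          simp only [ContinuousLinearMap.mul_apply, ContinuousLinearMap.one_apply] at h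
          exact h
        have h2 : (↑Vu⁻¹ : H →L[ℂ] H) (P (ψ:H)) = P (ψ:H) := by
          have h := congrArg (fun f : H →L[ℂ] H => f (ψ:H)) hVinvP
          simp only [ContinuousLinearMap.mul_apply] at h
          exact h
        rw [h1, h2, smul_sub, smul_smul, smul_smul, inv_mul_cancel₀ hβc, one_smul,
          one_smul]
      rw [hPy, hEy]
      rw [smul_neg, smul_smul, neg_mul, inv_mul_cancel₀ hz0, neg_smul, one_smul,
        neg_neg]
      abel
  -- kernel is trivial
  have hker : ∀ φ : B.domain, opRel A B hsub β z φ = 0 → (φ:H) = 0 := by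
    intro φ h0
    have h1 := hleft φ
    rw [h0, map_zero] at h1
    set w : H := A ⟨(φ:H), hsub φ.2⟩ with hwdef
    have hφ : (φ:H) = -(R0 w) := eq_neg_of_add_eq_zero_left h1.symm
    have hAφ : w = -((-z⁻¹) • T w + F w) := by
      have he : (⟨(φ:H), hsub φ.2⟩ : A.domain)
          = -(⟨R0 w, hsub (hR0mem w)⟩ : A.domain) := by
        apply Subtype.ext
        exact hφ
      calc w = A ⟨(φ:H), hsub φ.2⟩ := hwdef
      _ = A (-(⟨R0 w, hsub (hR0mem w)⟩ : A.domain)) := by rw [he]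
      _ = -(A ⟨R0 w, hsub (hR0mem w)⟩) := LinearPMap.map_neg _ _
      _ = -((-z⁻¹) • T w + F w) := by rw [hAR0 w (hR0mem w)]
    have hKw : ((↑Mu : H →L[ℂ] H) + F) w = 0 := by
      have h2 : w + ((-z⁻¹) • T w + F w) = 0 := eq_neg_iff_add_eq_zero.mp hAφ
      rw [ContinuousLinearMap.add_apply, hMuapp]
      rw [neg_smul] at h2
      calc w - z⁻¹ • T w + F w = w + (-(z⁻¹ • T w) + F w) := by abel
      _ = 0 := h2
    have hw0 : w = 0 := by
      have h3 : (↑Ku : H →L[ℂ] H) w = 0 := by rw [hKuval]; exact hKw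
      calc w = ((↑Ku⁻¹ : H →L[ℂ] H) * ↑Ku) w := by rw [Ku.inv_mul]; simp
      _ = (↑Ku⁻¹ : H →L[ℂ] H) ((↑Ku : H →L[ℂ] H) w) := rfl
      _ = 0 := by rw [h3, map_zero]
    rw [hφ, hw0, map_zero, neg_zero]
  -- assemble the answer
  have hβi : (0:ℝ) ≤ β⁻¹ := inv_nonneg.mpr hβ0.le
  refine ⟨R0 * (↑Ku⁻¹ : H →L[ℂ] H), ⟨fun x => ⟨hRmem x, hinv1 x⟩, ?_⟩, ?_⟩
  · -- left inverse property
    intro ψ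
    set x : H := opRel A B hsub β z ψ with hxdef
    have h1 := hinv1 x
    have ha : ((R0 * (↑Ku⁻¹ : H →L[ℂ] H)) x) ∈ (opRel A B hsub β z).domain :=
      hRmem x
    have hδ : opRel A B hsub β z
        ((⟨(R0 * (↑Ku⁻¹ : H →L[ℂ] H)) x, ha⟩ : (opRel A B hsub β z).domain) - ψ)
        = 0 := by
      rw [LinearPMap.map_sub]
      rw [show opRel A B hsub β z
          (⟨(R0 * (↑Ku⁻¹ : H →L[ℂ] H)) x, ha⟩ : (opRel A B hsub β z).domain) = x
          from h1, ← hxdef, sub_self]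
    have h2 := hker _ hδ
    have h3 : (R0 * (↑Ku⁻¹ : H →L[ℂ] H)) x - (ψ:H) = 0 := h2
    exact sub_eq_zero.mp h3
  · -- norm bound
    rw [show P ∘L Ring.inverse (P ∘L T - z • 1) ∘L P
        = (-z⁻¹) • ((P : H →L[ℂ] H) * ↑Mu⁻¹) from hRinf]
    have hKinveq : (↑Ku⁻¹ : H →L[ℂ] H)
        = ↑(Units.oneSub (-((↑Mu⁻¹ : H →L[ℂ] H) * F)) hKt)⁻¹ * ↑Mu⁻¹ := by
      rw [hKudef, mul_inv_rev, Units.val_mul]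
    have hG2 : ‖(↑(Units.oneSub (-((↑Mu⁻¹ : H →L[ℂ] H) * F)) hKt)⁻¹ :
        H →L[ℂ] H)‖ ≤ 2 := aux_oneSub_inv_norm_le hone _ hKt2 hKt
    have hKinv2 : ‖(↑Ku⁻¹ : H →L[ℂ] H)‖ ≤ 2 * c1 := by
      rw [hKinveq]
      refine le_trans (norm_mul_le _ _) ?_
      rw [← hc1def]
      exact mul_le_mul hG2 le_rfl hc10 (by norm_num)
    have hE2 : ‖E‖ ≤ 2 * ‖S'‖ * β⁻¹ := by
      rw [hEdef, norm_smul, norm_inv, hβnorm]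
      have h2 : ‖S' * (↑Vu⁻¹ : H →L[ℂ] H)‖ ≤ ‖S'‖ * 2 := by
        refine le_trans (norm_mul_le _ _) ?_
        exact mul_le_mul le_rfl hVinv2 (norm_nonneg _) (norm_nonneg _)
      calc β⁻¹ * ‖S' * (↑Vu⁻¹ : H →L[ℂ] H)‖ ≤ β⁻¹ * (‖S'‖ * 2) :=
            mul_le_mul_of_nonneg_left h2 hβi
      _ = 2 * ‖S'‖ * β⁻¹ := by ring
    have hDid : (↑Ku⁻¹ : H →L[ℂ] H) - ↑Mu⁻¹ = -(↑Ku⁻¹ * F * ↑Mu⁻¹) := by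
      have h4 : (↑Ku⁻¹ : H →L[ℂ] H) * (↑Mu - ↑Ku) * ↑Mu⁻¹ = ↑Ku⁻¹ - ↑Mu⁻¹ := by
        rw [mul_sub, Units.inv_mul, sub_mul, one_mul, Units.mul_inv_cancel_right]
      have h5 : (↑Mu : H →L[ℂ] H) - ↑Ku = -F := by rw [hKuval]; abel
      rw [← h4, h5, mul_neg, neg_mul]
    have hn1 : ‖E * (↑Ku⁻¹ : H →L[ℂ] H)‖ ≤ (2 * ‖S'‖ * β⁻¹) * (2 * c1) := by
      refine le_trans (norm_mul_le _ _) ?_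
      refine mul_le_mul hE2 hKinv2 (norm_nonneg _) ?_
      exact mul_nonneg (by positivity) hβi
    have hn2 : ‖(↑Ku⁻¹ : H →L[ℂ] H) - ↑Mu⁻¹‖ ≤ (2*c1) * (2*‖W‖*β⁻¹) * c1 := by
      rw [hDid, norm_neg]
      refine le_trans (norm_mul_le _ _) ?_
      have h6 : ‖(↑Ku⁻¹ : H →L[ℂ] H) * F‖ ≤ (2*c1) * (2*‖W‖*β⁻¹) := by
        refine le_trans (norm_mul_le _ _) ?_
        refine mul_le_mul hKinv2 hF2 (norm_nonneg _) (by positivity)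
      rw [← hc1def]
      exact mul_le_mul h6 le_rfl hc10
        (mul_nonneg (by positivity) (mul_nonneg (by positivity) hβi))
    have hsplitR : R0 * (↑Ku⁻¹ : H →L[ℂ] H) - (-z⁻¹) • ((P : H →L[ℂ] H) * ↑Mu⁻¹)
        = E * ↑Ku⁻¹ + (-z⁻¹) • ((P : H →L[ℂ] H) * (↑Ku⁻¹ - ↑Mu⁻¹)) := by
      rw [hR0def, add_mul, smul_mul_assoc, mul_sub, smul_sub]
      abel
    rw [hsplitR]
    have hn3 : ‖(-z⁻¹) • ((P : H →L[ℂ] H) * (↑Ku⁻¹ - ↑Mu⁻¹))‖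
        ≤ ‖z‖⁻¹ * (‖P‖ * ((2*c1) * (2*‖W‖*β⁻¹) * c1)) := by
      rw [norm_smul, norm_neg, norm_inv]
      refine mul_le_mul le_rfl ?_ (norm_nonneg _) (by positivity)
      refine le_trans (norm_mul_le _ _) ?_
      exact mul_le_mul le_rfl hn2 (norm_nonneg _) (norm_nonneg _)
    calc ‖E * (↑Ku⁻¹ : H →L[ℂ] H) + (-z⁻¹) • ((P : H →L[ℂ] H) * (↑Ku⁻¹ - ↑Mu⁻¹))‖
        ≤ ‖E * (↑Ku⁻¹ : H →L[ℂ] H)‖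
          + ‖(-z⁻¹) • ((P : H →L[ℂ] H) * (↑Ku⁻¹ - ↑Mu⁻¹))‖ := norm_add_le _ _
    _ ≤ (2*‖S'‖*β⁻¹)*(2*c1) + ‖z‖⁻¹*(‖P‖*((2*c1)*(2*‖W‖*β⁻¹)*c1)) := by
          linarith [hn1, hn3]
    _ = (4 * ‖S'‖ * c1 + 4 * ‖z‖⁻¹ * ‖P‖ * ‖W‖ * c1 ^ 2) / β := by
          rw [div_eq_mul_inv]
          ring
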